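/- Let f: A → B be a surjective rack homomorphism between racks. If a and b in A are endpoints of an f-horn (i.e. there exist x ∈ A, n ∈ ℕ, elements a_i, b_i ∈ A with f(a_i) = f(b_i), and signs δ_i ∈ {−1,1}, such that a = x ◁^{δ_1} a_1 ··· ◁^{δ_n} a_n and b = x ◁^{δ_1} b_1 ··· ◁^{δ_n} b_n), then the set of such pairs (a,b) forms a congruence on A equal to the centralizing relation C₁(f) generated by the pairs ((x ◁ a) ◁⁻¹ b, x) with f(a) = f(b). -/

import Mathlib

/-- A rack: a set with operations `◁`, `◁⁻¹` satisfying (R1) and (R2). -/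
class PaperRack (X : Type*) where
  act : X → X → X
  inv : X → X → X
  r1a : ∀ x y, inv (act x y) y = x
  r1b : ∀ x y, act (inv x y) y = x
  r2 : ∀ x y z, act (act x y) z = act (act x z) (act y z)

infixl:70 " ◁ " => PaperRack.act
infixl:70 " ◁⁻¹ " => PaperRack.inv

/-- `x ◁^{δ₁} c₁ ⋯ ◁^{δₙ} cₙ`: the successive action on `x` of a list of elements
with signs (`true` for `◁`, `false` for `◁⁻¹`). -/
def foldAct {X : Type*} [PaperRack X] (x : X) (l : List (X × Bool)) : X :=
  l.foldl (fun y p => if p.2 then y ◁ p.1 else y ◁⁻¹ p.1) x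

/-- The relation "being the two endpoints of an `f`-horn": there are `x`, elements
`aᵢ, bᵢ` with `f aᵢ = f bᵢ` and signs `δᵢ`, with `a = x ◁^{δ₁} a₁ ⋯ ◁^{δₙ} aₙ` and
`b = x ◁^{δ₁} b₁ ⋯ ◁^{δₙ} bₙ`. -/
def HornRel {A B : Type*} [PaperRack A] (f : A → B) (a b : A) : Prop :=
  ∃ (x : A) (l : List (A × A × Bool)),
    (∀ q ∈ l, f q.1 = f q.2.1) ∧
    a = foldAct x (l.map fun q => (q.1, q.2.2)) ∧
    b = foldAct x (l.map fun q => (q.2.1, q.2.2))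

/-- The centralizing relation `C₁(f)`: the smallest congruence (equivalence
relation compatible with `◁`) containing the pairs `((x ◁ a) ◁⁻¹ b, x)` with
`f a = f b`. -/
def C1 {A B : Type*} [PaperRack A] (f : A → B) (a b : A) : Prop :=
  ∀ S : A → A → Prop, Equivalence S →
    (∀ x y u v, S x y → S u v → S (x ◁ u) (y ◁ v)) →
    (∀ x u v : A, f u = f v → S ((x ◁ u) ◁⁻¹ v) x) →
    S a b

/-!
Right multiplication by a signed word `w` is a rack endomorphism, and
`b ◁ (t ◁ w) = b ◁ w⁻¹ ◁ t ◁ w`. So, for any map `f`, horns can be reversed, chained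
through the inverse of the word they share, and multiplied on either side, and the generators
of `C₁(f)` are two-letter horns: `HornRel f` is a congruence containing them.
Conversely, change the letters of a horn one at a time, pushing the rest of the word through
the changed letter. When `f` is a homomorphism the pushed letters still have equal images, so
each change is `t ◁^δ u ~ t ◁^δ v` with `f u = f v`, which a congruence containing the
generators relates: `(t ◁ u) ◁⁻¹ v ~ t` multiplied by `v`, resp. applied to `t ◁⁻¹ u`.
-/

namespace PaperRack

variable {X : Type*} [PaperRack X]

theorem act_left_injective (c : X) : Function.Injective (· ◁ c) := fun x y h => by
  simpa only [r1a] using congrArg (· ◁⁻¹ c) h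

theorem inv_act_distrib (x y c : X) : (x ◁⁻¹ y) ◁ c = (x ◁ c) ◁⁻¹ (y ◁ c) :=
  act_left_injective (y ◁ c) (by simp only [r1b, ← r2])

theorem act_inv_distrib (x y c : X) : (x ◁ y) ◁⁻¹ c = (x ◁⁻¹ c) ◁ (y ◁⁻¹ c) :=
  act_left_injective c (by simp only [r1b, r2])

theorem inv_inv_distrib (x y c : X) : (x ◁⁻¹ y) ◁⁻¹ c = (x ◁⁻¹ c) ◁⁻¹ (y ◁⁻¹ c) :=
  act_left_injective c (by simp only [r1b, inv_act_distrib])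

def sgnAct (x c : X) (δ : Bool) : X := if δ then x ◁ c else x ◁⁻¹ c

@[simp]
theorem sgnAct_sgnAct_not (x c : X) (δ : Bool) : sgnAct (sgnAct x c δ) c (!δ) = x := by
  cases δ <;> simp [sgnAct, r1a, r1b]

theorem sgnAct_sgnAct (t u c : X) (δ' δ : Bool) :
    sgnAct (sgnAct t u δ') c δ = sgnAct (sgnAct t c δ) (sgnAct u c δ) δ' := by
  cases δ' <;> cases δ
  exacts [inv_inv_distrib t u c, inv_act_distrib t u c, act_inv_distrib t u c, r2 t u c]

end PaperRack

open PaperRack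

def invWord {X : Type*} (l : List (X × Bool)) : List (X × Bool) :=
  (l.map fun p => (p.1, !p.2)).reverse

@[simp]
theorem invWord_cons {X : Type*} (c : X) (δ : Bool) (l : List (X × Bool)) :
    invWord ((c, δ) :: l) = invWord l ++ [(c, !δ)] := by
  simp [invWord]

@[simp]
theorem invWord_invWord {X : Type*} (l : List (X × Bool)) : invWord (invWord l) = l := by
  simp [invWord, List.map_reverse, Function.comp_def]

section FoldAct

variable {X : Type*} [PaperRack X]

@[simp]
theorem foldAct_nil (x : X) : foldAct x [] = x := rfl

@[simp]
theorem foldAct_cons (x c : X) (δ : Bool) (l : List (X × Bool)) :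
    foldAct x ((c, δ) :: l) = foldAct (sgnAct x c δ) l := rfl

@[simp]
theorem foldAct_append (x : X) (l m : List (X × Bool)) :
    foldAct x (l ++ m) = foldAct (foldAct x l) m :=
  List.foldl_append

theorem foldAct_sgnAct (t u : X) (δ : Bool) (l : List (X × Bool)) :
    foldAct (sgnAct t u δ) l = sgnAct (foldAct t l) (foldAct u l) δ := by
  induction l generalizing t u with
  | nil => rfl
  | cons p l ih =>
    obtain ⟨c, δ'⟩ := p
    simp only [foldAct_cons]
    rw [sgnAct_sgnAct, ih]

@[simp]
theorem foldAct_foldAct_invWord (x : X) (l : List (X × Bool)) :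
    foldAct (foldAct x l) (invWord l) = x := by
  induction l generalizing x with
  | nil => rfl
  | cons p l ih =>
    obtain ⟨c, δ⟩ := p
    simp [ih]

@[simp]
theorem foldAct_invWord_foldAct (x : X) (l : List (X × Bool)) :
    foldAct (foldAct x (invWord l)) l = x := by
  simpa using foldAct_foldAct_invWord x (invWord l)

theorem act_foldAct (b t : X) (l : List (X × Bool)) :
    b ◁ foldAct t l = foldAct b (invWord l ++ (t, true) :: l) := by
  rw [foldAct_append, foldAct_cons, foldAct_sgnAct, foldAct_invWord_foldAct]
  rfl

end FoldAct

namespace HornRel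

variable {A B : Type*} [PaperRack A] {f : A → B}

protected theorem refl (a : A) : HornRel f a a := ⟨a, [], by simp, rfl, rfl⟩

protected theorem symm {a b : A} : HornRel f a b → HornRel f b a := by
  rintro ⟨x, l, hl, rfl, rfl⟩
  refine ⟨x, l.map fun q => (q.2.1, q.1, q.2.2),
    List.forall_mem_map.2 fun q hq => (hl q hq).symm, ?_, ?_⟩ <;>
  simp only [List.map_map, Function.comp_def]

/-- Go from `a` back to `b = y ◁ m₁ = x ◁ l₂`, undo `l₂` to reach `x`, then apply `l₁`;
on the other side the same word leads from `c = y ◁ m₂` back to `c`. -/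
protected theorem trans {a b c : A} : HornRel f a b → HornRel f b c → HornRel f a c := by
  rintro ⟨x, l, hl, rfl, hb⟩ ⟨y, m, hm, hb', rfl⟩
  refine ⟨y, m ++ (invWord (l.map fun q => (q.2.1, q.2.2))).map (fun p => (p.1, p.1, p.2)) ++ l,
    ?_, ?_, ?_⟩
  · simp only [List.forall_mem_append, List.forall_mem_map]
    exact ⟨⟨hm, fun _ _ => trivial⟩, hl⟩
  all_goals
    simp only [List.map_append, List.map_map, Function.comp_def, Prod.mk.eta, List.map_id',
      foldAct_append, ← hb', hb, foldAct_foldAct_invWord, foldAct_invWord_foldAct]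

protected theorem act_right {a b : A} (c : A) : HornRel f a b → HornRel f (a ◁ c) (b ◁ c) := by
  rintro ⟨x, l, hl, rfl, rfl⟩
  refine ⟨x, l ++ [(c, c, true)], ?_, ?_, ?_⟩
  · simpa only [List.forall_mem_append, List.forall_mem_singleton, and_true] using hl
  all_goals simp only [List.map_append, List.map_singleton, foldAct_append, foldAct_cons,
    foldAct_nil]; rfl

protected theorem act_left (b : A) {c d : A} : HornRel f c d → HornRel f (b ◁ c) (b ◁ d) := by
  rintro ⟨t, l, hl, rfl, rfl⟩
  refine ⟨b, (l.map fun q => (q.1, q.2.1, !q.2.2)).reverse ++ (t, t, true) :: l, ?_, ?_, ?_⟩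
  · simp only [List.forall_mem_append, List.mem_reverse, List.forall_mem_map,
      List.forall_mem_cons, true_and]
    exact ⟨hl, hl⟩
  all_goals simp only [act_foldAct, invWord, List.map_append, List.map_reverse, List.map_map,
    List.map_cons, Function.comp_def]

protected theorem act {a b c d : A} (hab : HornRel f a b) (hcd : HornRel f c d) :
    HornRel f (a ◁ c) (b ◁ d) :=
  (hab.act_right c).trans (hcd.act_left b)

theorem act_inv_act_of_eq (x : A) {u v : A} (huv : f u = f v) :
    HornRel f ((x ◁ u) ◁⁻¹ v) x := by
  refine ⟨x, [(u, u, true), (v, u, false)], ?_, rfl, ?_⟩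
  · simpa using huv.symm
  · exact (r1a x u).symm

end HornRel

theorem hornRel_equivalence {A B : Type*} [PaperRack A] (f : A → B) : Equivalence (HornRel f) :=
  ⟨HornRel.refl, HornRel.symm, HornRel.trans⟩

section Hom

variable {A B : Type*} [PaperRack A] [PaperRack B] {f : A → B}

theorem map_sgnAct (hact : ∀ x y : A, f (x ◁ y) = f x ◁ f y)
    (hinv : ∀ x y : A, f (x ◁⁻¹ y) = f x ◁⁻¹ f y) (x c : A) (δ : Bool) :
    f (sgnAct x c δ) = sgnAct (f x) (f c) δ := by
  cases δ
  exacts [hinv x c, hact x c]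

theorem map_foldAct_eq_of_eq (hact : ∀ x y : A, f (x ◁ y) = f x ◁ f y)
    (hinv : ∀ x y : A, f (x ◁⁻¹ y) = f x ◁⁻¹ f y) {u v : A} (huv : f u = f v)
    (l : List (A × Bool)) : f (foldAct u l) = f (foldAct v l) := by
  induction l generalizing u v with
  | nil => exact huv
  | cons p l ih =>
    obtain ⟨c, δ⟩ := p
    simp only [foldAct_cons]
    exact ih (by rw [map_sgnAct hact hinv, map_sgnAct hact hinv, huv])

theorem HornRel.c1 (hact : ∀ x y : A, f (x ◁ y) = f x ◁ f y)
    (hinv : ∀ x y : A, f (x ◁⁻¹ y) = f x ◁⁻¹ f y) {a b : A} (h : HornRel f a b) :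
    C1 f a b := by
  intro S hS hcomp hgen
  have move : ∀ t u v δ, f u = f v → S (sgnAct t u δ) (sgnAct t v δ) := by
    intro t u v δ huv
    cases δ
    · change S (t ◁⁻¹ u) (t ◁⁻¹ v)
      simpa only [r1b] using hS.symm (hgen (t ◁⁻¹ u) u v huv)
    · change S (t ◁ u) (t ◁ v)
      simpa only [r1b] using hcomp _ _ v v (hgen t u v huv) (hS.refl v)
  obtain ⟨x, l, hl, rfl, rfl⟩ := h
  induction l generalizing x with
  | nil => exact hS.refl x
  | cons q l ih =>
    obtain ⟨u, v, δ⟩ := q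
    refine hS.trans (ih (sgnAct x u δ) fun q hq => hl q (List.mem_cons_of_mem _ hq)) ?_
    simp only [List.map_cons, foldAct_cons, foldAct_sgnAct]
    exact move _ _ _ _ (map_foldAct_eq_of_eq hact hinv (hl _ List.mem_cons_self) _)

end Hom

theorem hornRel_is_congruence_eq_C1_general {A B : Type*} [PaperRack A] [PaperRack B]
    (f : A → B)
    (hact : ∀ x y : A, f (x ◁ y) = f x ◁ f y)
    (hinv : ∀ x y : A, f (x ◁⁻¹ y) = f x ◁⁻¹ f y) :
    Equivalence (HornRel f) ∧
    (∀ a b c d : A, HornRel f a b → HornRel f c d →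
      HornRel f (a ◁ c) (b ◁ d)) ∧
    (∀ a b : A, HornRel f a b ↔ C1 f a b) :=
  ⟨hornRel_equivalence f, fun _ _ _ _ => HornRel.act, fun _ _ =>
    ⟨HornRel.c1 hact hinv, fun h => h _ (hornRel_equivalence f) (fun _ _ _ _ => HornRel.act)
      fun x _ _ => HornRel.act_inv_act_of_eq x⟩⟩

/-- For a surjective rack homomorphism `f`, the pairs of endpoints of `f`-horns
form a congruence on `A`, which is exactly the centralizing relation `C₁(f)`. -/
theorem hornRel_is_congruence_eq_C1 {A B : Type*} [PaperRack A] [PaperRack B]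
    (f : A → B)
    (hact : ∀ x y : A, f (x ◁ y) = f x ◁ f y)
    (hinv : ∀ x y : A, f (x ◁⁻¹ y) = f x ◁⁻¹ f y)
    (hsurj : Function.Surjective f) :
    Equivalence (HornRel f) ∧
    (∀ a b c d : A, HornRel f a b → HornRel f c d →
      HornRel f (a ◁ c) (b ◁ d)) ∧
    (∀ a b : A, HornRel f a b ↔ C1 f a b) :=
  hornRel_is_congruence_eq_C1_general f hact hinv
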